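/- arXiv:math/0701589 — 3 statements merged into one kernel-verified Lean document; each statement's English description precedes it below -/
import Mathlib

section
/- The Lebesgue measure of the mixed triangle S₀ = {x ∈ ℝ² : ‖x − K‖ ≤ 1, ‖x − L‖ ≤ 1, x₂ ≥ 0}, where K = (0,0) and L = (1,0), equals π/3 − √3/4 (equivalently (8π − 6√3)/24). -/
/-!
Cut the mixed triangle into horizontal slices. At height `y ≥ 0` the two discs leave the
interval `[1 - √(1 - y²), √(1 - y²)]`, which is nonempty exactly for `y ≤ √3 / 2`, so the area is
`∫₀^{√3/2} (2√(1 - y²) - 1) dy`; an antiderivative of `2√(1 - y²)` is `y √(1 - y²) + arcsin y`.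
-/

open MeasureTheory Real

noncomputable def pt (a b : ℝ) : EuclideanSpace ℝ (Fin 2) :=
  (WithLp.equiv 2 (Fin 2 → ℝ)).symm ![a, b]

open Set

lemma sq_le_and_sub_one_sq_le_iff {x c : ℝ} :
    x ^ 2 ≤ c ∧ (x - 1) ^ 2 ≤ c ↔ 1 - √c ≤ x ∧ x ≤ √c := by
  rcases le_or_gt 0 c with hc | hc
  · rw [Real.sq_le hc, Real.sq_le hc]
    have hsqrt := Real.sqrt_nonneg c
    constructor
    · rintro ⟨⟨-, h₁⟩, h₂, -⟩
      exact ⟨by linarith, h₁⟩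
    · rintro ⟨h₁, h₂⟩
      exact ⟨⟨by linarith, h₂⟩, by linarith, by linarith⟩
  · rw [Real.sqrt_eq_zero'.mpr hc.le]
    constructor
    · rintro ⟨h, -⟩; nlinarith [sq_nonneg x]
    · rintro ⟨h₁, h₂⟩; linarith

lemma hasDerivAt_mul_sqrt_one_sub_sq_add_arcsin {x : ℝ} (hx : x ∈ Ioo (-1) 1) :
    HasDerivAt (fun t => t * √(1 - t ^ 2) + arcsin t) (2 * √(1 - x ^ 2)) x := by
  have hpos : 0 < 1 - x ^ 2 := by nlinarith [hx.1, hx.2]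
  have hs : √(1 - x ^ 2) ^ 2 = 1 - x ^ 2 := sq_sqrt hpos.le
  refine (((hasDerivAt_id x).mul (((hasDerivAt_pow 2 x).const_sub 1).sqrt hpos.ne')).add
    (hasDerivAt_arcsin hx.1.ne' hx.2.ne)).congr_deriv ?_
  field_simp
  simp only [id, hs]
  ring

theorem integral_sqrt_one_sub_sq_of_le {a b : ℝ} (ha : -1 ≤ a) (hab : a ≤ b) (hb : b ≤ 1) :
    ∫ x in a..b, √(1 - x ^ 2) =
      (b * √(1 - b ^ 2) + arcsin b - (a * √(1 - a ^ 2) + arcsin a)) / 2 := by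
  rw [eq_div_iff two_ne_zero, mul_comm, ← intervalIntegral.integral_const_mul]
  refine intervalIntegral.integral_eq_sub_of_hasDerivAt_of_le hab (by fun_prop)
    (fun x hx => hasDerivAt_mul_sqrt_one_sub_sq_add_arcsin ?_)
    ((by fun_prop : Continuous fun x : ℝ => 2 * √(1 - x ^ 2)).intervalIntegrable _ _)
  exact ⟨by linarith [hx.1], by linarith [hx.2]⟩

lemma integral_two_mul_sqrt_one_sub_sq_sub_one :
    ∫ y in (0 : ℝ)..√3 / 2, (2 * √(1 - y ^ 2) - 1) = π / 3 - √3 / 4 := by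
  have hπ := pi_pos
  have hint : IntervalIntegrable (fun y : ℝ => 2 * √(1 - y ^ 2)) volume 0 (√3 / 2) :=
    (by fun_prop : Continuous fun y : ℝ => 2 * √(1 - y ^ 2)).intervalIntegrable _ _
  rw [intervalIntegral.integral_sub hint intervalIntegrable_const,
    intervalIntegral.integral_const_mul, intervalIntegral.integral_const, ← sin_pi_div_three,
    integral_sqrt_one_sub_sq_of_le (by norm_num) (sin_nonneg_of_nonneg_of_le_pi (by positivity)
      (by linarith)) (sin_le_one _), ← cos_eq_sqrt_one_sub_sin_sq (by linarith) (by linarith),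
    arcsin_sin (by linarith) (by linarith), sin_pi_div_three, cos_pi_div_three]
  simp only [ne_eq, OfNat.ofNat_ne_zero, not_false_eq_true, zero_pow, sub_zero, sqrt_one,
    zero_mul, arcsin_zero, add_zero, smul_eq_mul]
  ring

lemma norm_sub_pt_le_one_iff (x : EuclideanSpace ℝ (Fin 2)) (a b : ℝ) :
    ‖x - pt a b‖ ≤ 1 ↔ (x 0 - a) ^ 2 + (x 1 - b) ^ 2 ≤ 1 := by
  rw [← sq_le_one_iff₀ (norm_nonneg _), EuclideanSpace.norm_sq_eq, Fin.sum_univ_two]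
  simp [pt, sq_abs]

lemma volume_setOf_euclideanSpace_fin_two (S : Set (ℝ × ℝ)) :
    volume {x : EuclideanSpace ℝ (Fin 2) | (x 0, x 1) ∈ S} = volume S :=
  ((volume_preserving_finTwoArrow ℝ).comp
    (EuclideanSpace.volume_preserving_symm_measurableEquiv_toLp (Fin 2))).measure_preimage_equiv
    (f := (MeasurableEquiv.toLp 2 (Fin 2 → ℝ)).symm.trans MeasurableEquiv.finTwoArrow) S

def mixedTriangle : Set (ℝ × ℝ) :=
  {p | p.1 ^ 2 + p.2 ^ 2 ≤ 1 ∧ (p.1 - 1) ^ 2 + p.2 ^ 2 ≤ 1 ∧ 0 ≤ p.2}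

lemma measurableSet_mixedTriangle : MeasurableSet mixedTriangle := by
  simp only [mixedTriangle, ofPred_and]
  exact (measurableSet_le (by fun_prop) measurable_const).inter
    ((measurableSet_le (by fun_prop) measurable_const).inter
      (measurableSet_le measurable_const measurable_snd))

lemma mk_mem_mixedTriangle_iff {x y : ℝ} :
    (x, y) ∈ mixedTriangle ↔ 0 ≤ y ∧ x ∈ Icc (1 - √(1 - y ^ 2)) √(1 - y ^ 2) := by
  simp only [mixedTriangle, mem_ofPred_eq, mem_Icc, ← sq_le_and_sub_one_sq_le_iff,
    le_sub_iff_add_le]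
  tauto

lemma two_mul_sqrt_one_sub_sq_sub_one_nonneg_iff {y : ℝ} (hy : 0 ≤ y) :
    0 ≤ 2 * √(1 - y ^ 2) - 1 ↔ y ≤ √3 / 2 := by
  rw [sub_nonneg, ← div_le_iff₀' two_pos, le_sqrt' (by norm_num), le_div_iff₀ two_pos,
    le_sqrt (by positivity) (by norm_num)]
  constructor <;> intro h <;> nlinarith

lemma volume_slice_mixedTriangle (y : ℝ) :
    volume ((fun x => (x, y)) ⁻¹' mixedTriangle) =
      (Icc 0 (√3 / 2)).indicator (fun y => ENNReal.ofReal (2 * √(1 - y ^ 2) - 1)) y := by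
  simp only [preimage, mk_mem_mixedTriangle_iff]
  by_cases hy : 0 ≤ y
  · simp only [hy, true_and, ofPred_mem_eq, volume_Icc]
    by_cases hy' : y ≤ √3 / 2
    · rw [indicator_of_mem (show y ∈ Icc 0 (√3 / 2) from ⟨hy, hy'⟩)]
      ring_nf
    · rw [indicator_of_notMem (fun h => hy' h.2), ENNReal.ofReal_eq_zero]
      linarith [(two_mul_sqrt_one_sub_sq_sub_one_nonneg_iff hy).not.mpr hy']
  · simp [hy]

theorem volume_mixedTriangle : volume mixedTriangle = ENNReal.ofReal (π / 3 - √3 / 4) := by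
  rw [Measure.volume_eq_prod, Measure.prod_apply_symm measurableSet_mixedTriangle]
  simp_rw [volume_slice_mixedTriangle]
  rw [lintegral_indicator measurableSet_Icc, ← ofReal_integral_eq_lintegral_ofReal,
    integral_Icc_eq_integral_Ioc, ← intervalIntegral.integral_of_le (by positivity),
    integral_two_mul_sqrt_one_sub_sq_sub_one]
  · exact (by fun_prop : Continuous fun y : ℝ => 2 * √(1 - y ^ 2) - 1).integrableOn_Icc
  · filter_upwards [ae_restrict_mem measurableSet_Icc] with y hy
    exact (two_mul_sqrt_one_sub_sq_sub_one_nonneg_iff hy.1).mpr hy.2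

theorem mixed_triangle_area :
    volume {x : EuclideanSpace ℝ (Fin 2) |
        ‖x - pt 0 0‖ ≤ 1 ∧ ‖x - pt 1 0‖ ≤ 1 ∧ 0 ≤ x 1} =
      ENNReal.ofReal (π / 3 - Real.sqrt 3 / 4) := by
  have hS : {x : EuclideanSpace ℝ (Fin 2) | ‖x - pt 0 0‖ ≤ 1 ∧ ‖x - pt 1 0‖ ≤ 1 ∧ 0 ≤ x 1} =
      {x | (x 0, x 1) ∈ mixedTriangle} := by
    ext x
    simp [norm_sub_pt_le_one_iff, mixedTriangle]
  rw [hS, volume_setOf_euclideanSpace_fin_two, volume_mixedTriangle]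
end

section
/- Let S₀ = {x ∈ ℝ² : ‖x − K‖ ≤ 1, ‖x − L‖ ≤ 1, x₂ ≥ 0}, where K = (0,0) and L = (1,0), and let D = closedBall((1/2, 0), 1/2). Then the Lebesgue measure of S₀ \ D equals (5π − 6√3)/24. -/
/-!
In coordinates the region is `{0 < x ≤ 1, lowerArc x < y ≤ upperArc x}`, between the semicircle
over `KL` and the two unit arcs centred at `K` and `L`, which meet at `(1/2, √3/2)`. Its area is
`∫₀¹ upperArc - ∫₀¹ lowerArc`. By the symmetry `x ↦ 1 - x` the first integral is twice the circular
segment `∫_{1/2}^1 √(1 - x²) = π/6 - √3/8`, and the second is the half-disc area `π/8`.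
-/

open MeasureTheory Real

open Set intervalIntegral

section regionBetween

variable {α : Type*} [MeasurableSpace α] {μ : Measure α} {f g : α → ℝ} {s : Set α}

theorem volume_region_between_oc_eq_lintegral (hf : Measurable f) (hg : Measurable g)
    (hs : MeasurableSet s) :
    μ.prod volume {p : α × ℝ | p.1 ∈ s ∧ p.2 ∈ Ioc (f p.1) (g p.1)} =
      ∫⁻ y in s, ENNReal.ofReal ((g - f) y) ∂μ := by
  rw [← volume_regionBetween_eq_lintegral' hf hg hs,
    Measure.prod_apply (measurableSet_region_between_oc hf hg hs),
    Measure.prod_apply (measurableSet_regionBetween hf hg hs)]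
  congr 1 with x
  by_cases hx : x ∈ s <;>
    simp only [regionBetween, preimage_ofPred_eq, hx, true_and, false_and, ofPred_mem_eq,
      ofPred_false, Real.volume_Ioc, Real.volume_Ioo]

end regionBetween

theorem integral_sqrt_one_sub_sq_cos {θ : ℝ} (h₀ : 0 ≤ θ) (hπ : θ ≤ π) :
    ∫ x in cos θ..1, √(1 - x ^ 2) = (θ - sin θ * cos θ) / 2 :=
  calc
    _ = ∫ x in cos θ..cos 0, √(1 - x ^ 2) := by rw [cos_zero]
    _ = ∫ t in θ..0, √(1 - cos t ^ 2) * -sin t :=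
          (integral_comp_mul_deriv (fun t _ => hasDerivAt_cos t) continuousOn_sin.neg
            (by fun_prop)).symm
    _ = ∫ t in (0)..θ, sin t ^ 2 := by
          rw [integral_symm, ← intervalIntegral.integral_neg]
          refine integral_congr fun t ht => ?_
          rw [uIcc_of_le h₀] at ht
          simp only [← sin_eq_sqrt_one_sub_cos_sq ht.1 (ht.2.trans hπ)]
          ring
    _ = _ := by simp [integral_sin_sq]; ring

theorem integral_sqrt_sq_sub_sq_sub (c : ℝ) {r : ℝ} (hr : 0 ≤ r) :
    ∫ x in (c - r)..(c + r), √(r ^ 2 - (x - c) ^ 2) = π * r ^ 2 / 2 := by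
  rcases hr.eq_or_lt with rfl | hr
  · simp
  have hscale : ∀ x, √(r ^ 2 - (x - c) ^ 2) = r * √(1 - (x / r - c / r) ^ 2) := by
    intro x
    rw [← sqrt_sq hr.le, ← sqrt_mul (sq_nonneg r), sqrt_sq hr.le]
    congr 1
    field_simp
  simp_rw [hscale, intervalIntegral.integral_const_mul,
    integral_comp_div_sub (fun y => √(1 - y ^ 2)) hr.ne']
  rw [show (c - r) / r - c / r = -1 by field_simp; ring,
    show (c + r) / r - c / r = 1 by field_simp; ring, smul_eq_mul, integral_sqrt_one_sub_sq]
  ring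

theorem volume_preserving_euclideanSpace_fin_two_prod :
    MeasurePreserving (fun x : EuclideanSpace ℝ (Fin 2) => (x 0, x 1)) volume volume :=
  (volume_preserving_finTwoArrow ℝ).comp
    (EuclideanSpace.volume_preserving_symm_measurableEquiv_toLp (Fin 2))

theorem norm_sub_pt_le_iff (x : EuclideanSpace ℝ (Fin 2)) (a b : ℝ) {r : ℝ} (hr : 0 ≤ r) :
    ‖x - pt a b‖ ≤ r ↔ (x 0 - a) ^ 2 + (x 1 - b) ^ 2 ≤ r ^ 2 := by
  rw [EuclideanSpace.norm_eq, Fin.sum_univ_two, Real.sqrt_le_left hr]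
  simp [pt]

namespace MixedTriangle

noncomputable def upperArc (x : ℝ) : ℝ := min √(1 - x ^ 2) √(1 - (x - 1) ^ 2)

noncomputable def lowerArc (x : ℝ) : ℝ := √(1 / 4 - (x - 1 / 2) ^ 2)

theorem continuous_upperArc : Continuous upperArc := by
  unfold upperArc; fun_prop

theorem continuous_lowerArc : Continuous lowerArc := by
  unfold lowerArc; fun_prop

theorem lowerArc_le_upperArc {x : ℝ} (hx : x ∈ Icc 0 1) : lowerArc x ≤ upperArc x :=
  le_min (sqrt_le_sqrt (by nlinarith [hx.1, hx.2])) (sqrt_le_sqrt (by nlinarith [hx.1, hx.2]))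

theorem exterior_iff (x y : ℝ) :
    ((x ^ 2 + y ^ 2 ≤ 1 ∧ (x - 1) ^ 2 + y ^ 2 ≤ 1 ∧ 0 ≤ y) ∧ ¬(x - 1 / 2) ^ 2 + y ^ 2 ≤ 1 / 4) ↔
      x ∈ Ioc 0 1 ∧ y ∈ Ioc (lowerArc x) (upperArc x) := by
  constructor
  · rintro ⟨⟨h₁, h₂, hy⟩, hD⟩
    rw [not_le] at hD
    have hy : 0 < y := hy.lt_of_ne (by rintro rfl; nlinarith)
    exact ⟨⟨by nlinarith, by nlinarith⟩, (sqrt_lt' hy).2 (by linarith),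
      le_min ((le_sqrt' hy).2 (by linarith)) ((le_sqrt' hy).2 (by linarith))⟩
  · rintro ⟨-, hlow, hup⟩
    have hy : 0 < y := (sqrt_nonneg _).trans_lt hlow
    have h₁ := (le_sqrt' hy).1 (hup.trans (min_le_left _ _))
    have h₂ := (le_sqrt' hy).1 (hup.trans (min_le_right _ _))
    have hD := (sqrt_lt' hy).1 hlow
    exact ⟨⟨by linarith, by linarith, hy.le⟩, by linarith⟩

theorem integral_upperArc : ∫ x in (0)..1, upperArc x = π / 3 - √3 / 4 := by
  have hsegment : ∫ x in (1 / 2)..1, √(1 - x ^ 2) = π / 6 - √3 / 8 := by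
    rw [← cos_pi_div_three, integral_sqrt_one_sub_sq_cos (by positivity) (by linarith [pi_pos]),
      cos_pi_div_three, sin_pi_div_three]
    ring
  have hleft : ∫ x in (0)..(1 / 2), upperArc x = ∫ x in (1 / 2)..1, √(1 - x ^ 2) := by
    calc
      _ = ∫ x in (0)..(1 / 2), √(1 - (1 - x) ^ 2) := by
          refine integral_congr fun x hx => ?_
          rw [uIcc_of_le (by norm_num)] at hx
          rw [upperArc, min_eq_right (sqrt_le_sqrt (by nlinarith [hx.1, hx.2])), sub_sq_comm]
      _ = ∫ x in (1 - 1 / 2)..(1 - 0), √(1 - x ^ 2) :=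
          integral_comp_sub_left (fun x => √(1 - x ^ 2)) 1
      _ = _ := by norm_num
  have hright : ∫ x in (1 / 2)..1, upperArc x = ∫ x in (1 / 2)..1, √(1 - x ^ 2) := by
    refine integral_congr fun x hx => ?_
    rw [uIcc_of_le (by norm_num)] at hx
    exact min_eq_left (sqrt_le_sqrt (by nlinarith [hx.1, hx.2]))
  have hint := fun a b => continuous_upperArc.intervalIntegrable (μ := volume) a b
  rw [← integral_add_adjacent_intervals (hint 0 (1 / 2)) (hint (1 / 2) 1), hleft, hright,
    hsegment]
  ring

theorem integral_lowerArc : ∫ x in (0)..1, lowerArc x = π / 8 := by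
  have hhalfDisc := integral_sqrt_sq_sub_sq_sub (1 / 2) (r := 1 / 2) (by norm_num)
  norm_num at hhalfDisc
  unfold lowerArc
  rw [hhalfDisc]
  ring

theorem volume_exterior :
    volume {p : ℝ × ℝ | p.1 ∈ Ioc 0 1 ∧ p.2 ∈ Ioc (lowerArc p.1) (upperArc p.1)} =
      ENNReal.ofReal ((5 * π - 6 * √3) / 24) := by
  have hint :=
    (continuous_upperArc.sub continuous_lowerArc).integrableOn_Ioc (μ := volume) (a := 0) (b := 1)
  rw [Measure.volume_eq_prod ℝ ℝ, volume_region_between_oc_eq_lintegral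
      continuous_lowerArc.measurable continuous_upperArc.measurable measurableSet_Ioc,
    ← ofReal_integral_eq_lintegral_ofReal hint, ← integral_of_le zero_le_one]
  · simp_rw [Pi.sub_apply]
    rw [integral_sub (continuous_upperArc.intervalIntegrable 0 1)
      (continuous_lowerArc.intervalIntegrable 0 1), integral_upperArc, integral_lowerArc]
    congr 1
    ring
  · filter_upwards [ae_restrict_mem measurableSet_Ioc] with x hx
    exact sub_nonneg.2 (lowerArc_le_upperArc (Ioc_subset_Icc_self hx))

end MixedTriangle

open MixedTriangle in
theorem mixed_triangle_exterior_area :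
    volume ({x : EuclideanSpace ℝ (Fin 2) |
        ‖x - pt 0 0‖ ≤ 1 ∧ ‖x - pt 1 0‖ ≤ 1 ∧ 0 ≤ x 1} \
        Metric.closedBall (pt (1/2) 0) (1/2)) =
      ENNReal.ofReal ((5 * π - 6 * Real.sqrt 3) / 24) := by
  have hS : {x : EuclideanSpace ℝ (Fin 2) | ‖x - pt 0 0‖ ≤ 1 ∧ ‖x - pt 1 0‖ ≤ 1 ∧ 0 ≤ x 1} \
      Metric.closedBall (pt (1/2) 0) (1/2) = (fun x => (x 0, x 1)) ⁻¹'
        {p : ℝ × ℝ | p.1 ∈ Ioc 0 1 ∧ p.2 ∈ Ioc (lowerArc p.1) (upperArc p.1)} := by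
    ext x
    rw [mem_preimage, mem_ofPred_eq, ← exterior_iff]
    simp only [mem_sdiff, mem_ofPred_eq, Metric.mem_closedBall, dist_eq_norm]
    rw [norm_sub_pt_le_iff x 0 0 zero_le_one, norm_sub_pt_le_iff x 1 0 zero_le_one,
      norm_sub_pt_le_iff x (1/2) 0 (by norm_num)]
    norm_num
  rw [hS, volume_preserving_euclideanSpace_fin_two_prod.measure_preimage
    (measurableSet_region_between_oc continuous_lowerArc.measurable
      continuous_upperArc.measurable measurableSet_Ioc).nullMeasurableSet, volume_exterior]
end

section
/- Let 0 < θ < π/3, and let T be the convex hull of the three points K = (0,0), L = (1,0) and M = (cos θ, sin θ) in the Euclidean plane. Then T has diameter exactly 1, and the Lebesgue measure of T \ closedBall((1/2, 0), 1/2) is strictly positive; i.e., a set of positive area of the triangle lies outside the circle having its longest side KL as diameter. -/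
/-!
The diameter of a convex hull is that of its vertices: the legs have length 1 and the base has
length `√(2 - 2 cos θ) ≤ 1` because `cos θ ≥ 1/2`. The apex `M` lies outside the circle on `KL`,
since `|M - (1/2, 0)|² = 5/4 - cos θ > 1/4`. The triangle is nondegenerate, so `M` is a limit of
interior points; an open neighbourhood of `M` outside the closed disc therefore meets the interior
of the triangle in a nonempty open set, which has positive area.
-/

open MeasureTheory Real

theorem Convex.measure_inter_pos_of_mem {E : Type*} [AddCommGroup E] [Module ℝ E]
    [TopologicalSpace E] [IsTopologicalAddGroup E] [ContinuousSMul ℝ E] [MeasurableSpace E]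
    (μ : Measure E) [μ.IsOpenPosMeasure] {s U : Set E} (hs : Convex ℝ s)
    (hs' : (interior s).Nonempty) (hU : IsOpen U) {x : E} (hxs : x ∈ s) (hxU : x ∈ U) :
    0 < μ (s ∩ U) := by
  have hx : x ∈ closure (interior s) := by
    rw [hs.closure_interior_eq_closure_of_nonempty_interior hs']
    exact subset_closure hxs
  have hmeet : (U ∩ interior s).Nonempty := mem_closure_iff.1 hx U hU hxU
  calc 0 < μ (U ∩ interior s) := (hU.inter isOpen_interior).measure_pos μ hmeet
    _ ≤ μ (s ∩ U) := measure_mono fun y hy ↦ ⟨interior_subset hy.2, hy.1⟩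

theorem affineSpan_eq_top_of_not_collinear {V P : Type*} [AddCommGroup V] [Module ℝ V]
    [AddTorsor V P] [FiniteDimensional ℝ V] (hV : Module.finrank ℝ V = 2) {p₁ p₂ p₃ : P}
    (h : ¬ Collinear ℝ {p₁, p₂, p₃}) : affineSpan ℝ {p₁, p₂, p₃} = ⊤ := by
  have hind := affineIndependent_iff_not_collinear_set.mpr h
  have hrange : Set.range ![p₁, p₂, p₃] = {p₁, p₂, p₃} := by
    rw [Matrix.range_cons, Matrix.range_cons_cons_empty, Set.singleton_union]
  rw [← hrange, hind.affineSpan_eq_top_iff_card_eq_finrank_add_one, hV, Fintype.card_fin]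

theorem dist_pt (a b c d : ℝ) :
    dist (pt a b) (pt c d) = √((a - c) ^ 2 + (b - d) ^ 2) := by
  simp [EuclideanSpace.dist_eq, pt, Fin.sum_univ_two, Real.dist_eq, sq_abs]

theorem not_collinear_pt {x y : ℝ} (hy : y ≠ 0) :
    ¬ Collinear ℝ {pt 0 0, pt 1 0, pt x y} := by
  intro h
  have hne : pt 0 0 ≠ pt 1 0 := fun h' ↦ by
    simpa [pt] using congrFun (congrArg WithLp.ofLp h') 0
  obtain ⟨r, hr⟩ := mem_affineSpan_pair_iff_exists_lineMap_eq.1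
    (h.mem_affineSpan_of_mem_of_ne (p₃ := pt x y) (by simp) (by simp) (by simp) hne)
  have hy0 := congrArg (· 1) hr
  simp only [pt, AffineMap.lineMap_apply] at hy0
  exact hy (by simpa using hy0.symm)

theorem diam_convexHull_pt_of_unit {c s : ℝ} (hcs : c ^ 2 + s ^ 2 = 1) (hc : 1 / 2 ≤ c) :
    Metric.diam (convexHull ℝ {pt 0 0, pt 1 0, pt c s}) = 1 := by
  have hLM : √((1 - c) ^ 2 + (0 - s) ^ 2) ≤ 1 := sqrt_le_one.2 (by nlinarith)
  rw [convexHull_diam, Metric.diam_triple, dist_pt, dist_pt, dist_pt]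
  simp only [show (0 - 1 : ℝ) ^ 2 + (0 - 0) ^ 2 = 1 by norm_num,
    show (0 - c) ^ 2 + (0 - s) ^ 2 = 1 by linarith, sqrt_one, max_self]
  exact max_eq_left hLM

theorem isosceles_triangle_counterexample
    (θ : ℝ) (hθ0 : 0 < θ) (hθ1 : θ < π / 3) :
    Metric.diam
        (convexHull ℝ {pt 0 0, pt 1 0, pt (Real.cos θ) (Real.sin θ)}) = 1 ∧
    0 < volume
        ((convexHull ℝ {pt 0 0, pt 1 0, pt (Real.cos θ) (Real.sin θ)}) \
          Metric.closedBall (pt (1/2) 0) (1/2)) := by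
  have hθπ : θ < π := by linarith [pi_pos]
  have hcos_gt : 1 / 2 < cos θ := by
    simpa using cos_lt_cos_of_nonneg_of_le_pi hθ0.le (by linarith [pi_pos]) hθ1
  have hcos_lt : cos θ < 1 := by simpa using cos_lt_cos_of_nonneg_of_le_pi le_rfl hθπ.le hθ0
  have hsin : 0 < sin θ := sin_pos_of_pos_of_lt_pi hθ0 hθπ
  have hunit : cos θ ^ 2 + sin θ ^ 2 = 1 := cos_sq_add_sin_sq θ
  refine ⟨diam_convexHull_pt_of_unit hunit hcos_gt.le, ?_⟩
  have hint : (interior (convexHull ℝ {pt 0 0, pt 1 0, pt (cos θ) (sin θ)})).Nonempty := by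
    rw [interior_convexHull_nonempty_iff_affineSpan_eq_top]
    exact affineSpan_eq_top_of_not_collinear finrank_euclideanSpace_fin
      (not_collinear_pt hsin.ne')
  have hM_out : pt (cos θ) (sin θ) ∉ Metric.closedBall (pt (1 / 2) 0) (1 / 2) := by
    rw [Metric.mem_closedBall, not_le, dist_pt, lt_sqrt (by norm_num)]
    nlinarith
  exact (convex_convexHull ℝ _).measure_inter_pos_of_mem volume hint
    Metric.isClosed_closedBall.isOpen_compl (subset_convexHull ℝ _ (by simp)) hM_out
end
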